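/- The poset NCP(e,e,n+1) := { u non-crossing partition of μ_{en} ∪ {0} : the partition u^♭ obtained by forgetting 0 is μ_e-invariant } is a lattice under refinement. -/
import Mathlib


open Set

noncomputable section
open scoped Classical

/-- `u` is a set-theoretical partition of the set `x ⊆ ℂ`. -/
def IsPartitionOf (x : Set ℂ) (u : Set (Set ℂ)) : Prop :=
  (∀ a ∈ u, a.Nonempty ∧ a ⊆ x) ∧ ∀ z ∈ x, ∃! a, a ∈ u ∧ z ∈ a

/-- The refinement order on partitions. -/
def Refines (u v : Set (Set ℂ)) : Prop :=
  ∀ a ∈ u, ∃ b ∈ v, a ⊆ b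

/-- A partition is non-crossing if the convex hulls of two parts can only meet
when the parts are equal. -/
def IsNoncrossing (u : Set (Set ℂ)) : Prop :=
  ∀ a ∈ u, ∀ b ∈ u, (convexHull ℝ a ∩ convexHull ℝ b).Nonempty → a = b

/-- The set-theoretical meet of two partitions: parts are the nonempty
intersections of parts. -/
def meetParts (u v : Set (Set ℂ)) : Set (Set ℂ) :=
  {s | s.Nonempty ∧ ∃ a ∈ u, ∃ b ∈ v, s = a ∩ b}

/-- The set of `n`-th roots of unity. -/
def mu (n : ℕ) : Set ℂ := {z : ℂ | z ^ n = 1}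

/-- `ζ_n = exp(2iπ/n)`. -/
def zeta (n : ℕ) : ℂ := Complex.exp (2 * (Real.pi : ℂ) * Complex.I / (n : ℂ))

/-- Multiplication of a partition by a complex constant. -/
def rotate (c : ℂ) (u : Set (Set ℂ)) : Set (Set ℂ) :=
  (fun a => (fun z => c * z) '' a) '' u

/-- Invariance of a partition under multiplication by the group `μ_e`. -/
def MuInvariant (e : ℕ) (u : Set (Set ℂ)) : Prop :=
  ∀ ζ : ℂ, ζ ^ e = 1 → rotate ζ u = u

/-- `NCP(e,1,n)`: non-crossing partitions of `μ_{en}` fixed by the `μ_e`-action. -/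
def NCPmu (e n : ℕ) : Set (Set (Set ℂ)) :=
  {u | IsPartitionOf (mu (e * n)) u ∧ IsNoncrossing u ∧ MuInvariant e u}

/-- A partition is long if `0` lies in the convex hull of one of its parts. -/
def IsLong (u : Set (Set ℂ)) : Prop :=
  ∃ a ∈ u, (0 : ℂ) ∈ convexHull ℝ a

/-- The partition `u^♭` obtained by forgetting `0`. -/
def flatNCP (u : Set (Set ℂ)) : Set (Set ℂ) :=
  {s | s.Nonempty ∧ ∃ a ∈ u, s = a \ {0}}

/-- `NCP(e,e,n+1)`: non-crossing partitions of `μ_{en} ∪ {0}` such that the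
partition obtained by forgetting `0` is `μ_e`-invariant. -/
def NCPee (e n : ℕ) : Set (Set (Set ℂ)) :=
  {u | IsPartitionOf (insert 0 (mu (e * n))) u ∧ IsNoncrossing u ∧
    MuInvariant e (flatNCP u)}

/-- The trivial (one-block) partition of `μ_{en} ∪ {0}`. -/
def trivEE (e n : ℕ) : Set (Set ℂ) := {insert 0 (mu (e * n))}

/-- The discrete partition of `μ_n`. -/
def discMu (n : ℕ) : Set (Set ℂ) := {s | ∃ z ∈ mu n, s = {z}}

/-- `z'` is the counterclockwise successor of `z` on the boundary of the convex
set `b` (all remaining points of `b` are strictly on the left of the directed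
line from `z` to `z'`). -/
def ccwSucc (b : Set ℂ) (z z' : ℂ) : Prop :=
  z ∈ b ∧ z' ∈ b ∧ z ≠ z' ∧
    ∀ w ∈ b, w ≠ z → w ≠ z' →
      0 < ((z' - z).re * (w - z).im - (z' - z).im * (w - z).re)

/-- `σ` is the permutation associated with a partition `u` (of a set in convex
position), sending each element of a part to its counterclockwise successor in
that part. -/
def IsSuccMapOn (u : Set (Set ℂ)) (σ : ℂ → ℂ) : Prop :=
  ∀ b ∈ u, ∀ z ∈ b, (b = {z} → σ z = z) ∧ (b ≠ {z} → ccwSucc b z (σ z))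

/-- Restriction of a partition to the subset `X`. -/
def resTo (X : Set ℂ) (u : Set (Set ℂ)) : Set (Set ℂ) :=
  {s | s.Nonempty ∧ ∃ a ∈ u, s = a ∩ X}

/-- `w` is the (classical) Kreweras complement of `u` in `v`, for partitions of
a subset `X ⊆ ℂ` in convex position: it is characterized by
`σ_u σ_w = σ_v` (composition of motions). -/
def KrewRel (X : Set ℂ) (u v w : Set (Set ℂ)) : Prop :=
  Refines u v ∧ Refines w v ∧
    ∃ σu σv σw : ℂ → ℂ, IsSuccMapOn u σu ∧ IsSuccMapOn v σv ∧ IsSuccMapOn w σw ∧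
      ∀ z ∈ X, σw (σu z) = σv z

/-- An element of `NCP(e,e,n+1)` is symmetric if `{0}` is a part (short
symmetric) or its flat is long (long symmetric); otherwise it is asymmetric. -/
def SymmPart (u : Set (Set ℂ)) : Prop :=
  ({0} : Set ℂ) ∈ u ∨ IsLong (flatNCP u)

/-- The map `* : NCP(e,1,n) → NCP(e,e,n+1)`: add `{0}` as a singleton part if
`u` is short, add `0` to the long part if `u` is long. -/
def starNCP (u : Set (Set ℂ)) : Set (Set ℂ) :=
  if IsLong u then
    {s | ∃ a ∈ u, s = if (0 : ℂ) ∈ convexHull ℝ a then insert 0 a else a}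
  else insert {(0 : ℂ)} u

/-- The part of `v` containing `0`. -/
def asymPart (v : Set (Set ℂ)) : Set ℂ := ⋃₀ {a ∈ v | (0 : ℂ) ∈ a}

/-- The union `ã` of the `μ_e`-orbit of the part of `v` containing `0`
(with `0` removed). -/
def tildePart (e : ℕ) (v : Set (Set ℂ)) : Set ℂ :=
  ⋃ ζ ∈ {z : ℂ | z ^ e = 1}, (fun z => ζ * z) '' (asymPart v \ {0})

/-- The map `♯ : NCP(e,e,n+1) → NCP(e,1,n)`. -/
def sharpNCP (e : ℕ) (v : Set (Set ℂ)) : Set (Set ℂ) :=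
  if SymmPart v then flatNCP v
  else insert (tildePart e v) {b ∈ flatNCP v | ¬ b ⊆ tildePart e v}

/-- The minimal asymmetric partition `m_ζ`, with only non-singleton part `{0, ζ}`. -/
def mzeta (e n : ℕ) (ζ : ℂ) : Set (Set ℂ) :=
  insert {0, ζ} {s | ∃ z ∈ mu (e * n), z ≠ ζ ∧ s = {z}}

/-- The set `a_ζ = {0, ζ_{en}ζ, ζ_{en}²ζ, …, ζ_{en}ⁿζ}`. -/
def azeta (e n : ℕ) (ζ : ℂ) : Set ℂ :=
  insert 0 {z : ℂ | ∃ k : ℕ, 1 ≤ k ∧ k ≤ n ∧ z = zeta (e * n) ^ k * ζ}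

/-- The maximal asymmetric partition `M_ζ`, with asymmetric part `a_ζ` and
remaining parts `ζ' a_ζ ∖ {0}` for `ζ' ∈ μ_e ∖ {1}`. -/
def Mzeta (e n : ℕ) (ζ : ℂ) : Set (Set ℂ) :=
  insert (azeta e n ζ)
    {s | ∃ ζ' : ℂ, ζ' ^ e = 1 ∧ ζ' ≠ 1 ∧ s = (fun z => ζ' * z) '' (azeta e n ζ \ {0})}

/-- `w` is the complement `u\v` of `u` in `v`, in `NCP(e,e,n+1)`, following the
three cases of the definition: (A) both symmetric, computed through the flats
in `NCP(e,1,n)`; (B) `v` asymmetric, computed in some interval `[disc, M_ζ]`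
through restriction to `a_ζ`; (C) `u` asymmetric, computed through the
isomorphisms `ψ_ζ` and `φ_ζ` with the non-crossing partitions of `a_ζ`. -/
def IsComplEE (e n : ℕ) (u v w : Set (Set ℂ)) : Prop :=
  Refines u v ∧
    ((SymmPart u ∧ SymmPart v ∧
        ∃ k, KrewRel (mu (e * n)) (flatNCP u) (flatNCP v) k ∧ w = starNCP k) ∨
     (¬ SymmPart v ∧ ∃ ζ : ℂ, ζ ^ (e * n) = 1 ∧ Refines v (Mzeta e n ζ) ∧
        Refines w (Mzeta e n ζ) ∧
        KrewRel (azeta e n ζ) (resTo (azeta e n ζ) u) (resTo (azeta e n ζ) v)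
          (resTo (azeta e n ζ) w)) ∨
     (¬ SymmPart u ∧ ∃ ζ : ℂ, ζ ^ (e * n) = 1 ∧ Refines (mzeta e n ζ) u ∧
        Refines w (Mzeta e n ζ) ∧
        KrewRel (azeta e n ζ) (resTo (azeta e n ζ) u) (resTo (azeta e n ζ) v)
          (resTo (azeta e n ζ) w)))

/-- Height of an element of `NCP(e,e,n+1)` with `m` parts: `n - (m-1)/e` in the
short symmetric case, `n+1 - (m-1)/e` in the long symmetric case,
`n+1 - m/e` in the asymmetric case. -/
def htEE (e n : ℕ) (u : Set (Set ℂ)) : ℤ :=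
  if ({0} : Set ℂ) ∈ u then (n : ℤ) - ((u.ncard : ℤ) - 1) / (e : ℤ)
  else if IsLong (flatNCP u) then (n : ℤ) + 1 - ((u.ncard : ℤ) - 1) / (e : ℤ)
  else (n : ℤ) + 1 - (u.ncard : ℤ) / (e : ℤ)

/-- The height-one symmetric partition `u_{p,q}`, with non-singleton parts the
`e` rotates `ζ_e^i {ζ_{ne}^p, ζ_{ne}^q}`. -/
def upq (e n : ℕ) (p q : ℤ) : Set (Set ℂ) :=
  {s | ∃ ζ : ℂ, ζ ^ e = 1 ∧ s = {ζ * zeta (e * n) ^ p, ζ * zeta (e * n) ^ q}} ∪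
    {s | ∃ z ∈ insert (0 : ℂ) (mu (e * n)), s = {z} ∧
      ∀ ζ : ℂ, ζ ^ e = 1 → z ≠ ζ * zeta (e * n) ^ p ∧ z ≠ ζ * zeta (e * n) ^ q}

/-- The height-one asymmetric partition `u_p`, with unique non-singleton part
`{0, ζ_{en}^p}`. -/
def upt (e n : ℕ) (p : ℤ) : Set (Set ℂ) :=
  insert {0, zeta (e * n) ^ p}
    {s | ∃ z ∈ mu (e * n), z ≠ zeta (e * n) ^ p ∧ s = {z}}

/-- A weakly increasing chain of length `N` in a set `S` of partitions. -/
def IsChainOf (S : Set (Set (Set ℂ))) (N : ℕ) (c : Fin N → Set (Set ℂ)) : Prop :=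
  (∀ i, c i ∈ S) ∧ ∀ i j : Fin N, i ≤ j → Refines (c i) (c j)

lemma refines_trans {u v w : Set (Set ℂ)} (h1 : Refines u v) (h2 : Refines v w) :
    Refines u w := by
  intro a ha
  obtain ⟨b, hb, hab⟩ := h1 a ha
  obtain ⟨c, hc, hbc⟩ := h2 b hb
  exact ⟨c, hc, hab.trans hbc⟩

lemma part_eq_of_mem {X : Set ℂ} {u : Set (Set ℂ)} (hu : IsPartitionOf X u)
    {a b : Set ℂ} {z : ℂ} (ha : a ∈ u) (hb : b ∈ u) (hza : z ∈ a) (hzb : z ∈ b) :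
    a = b := by
  have hzX : z ∈ X := (hu.1 a ha).2 hza
  obtain ⟨c, -, hc⟩ := hu.2 z hzX
  rw [hc a ⟨ha, hza⟩, hc b ⟨hb, hzb⟩]

lemma meet_isPartition {X : Set ℂ} {u v : Set (Set ℂ)}
    (hu : IsPartitionOf X u) (hv : IsPartitionOf X v) :
    IsPartitionOf X (meetParts u v) := by
  constructor
  · rintro s ⟨hs, a, ha, b, hb, rfl⟩
    exact ⟨hs, Set.inter_subset_left.trans (hu.1 a ha).2⟩
  · intro z hz
    obtain ⟨a, ⟨ha, hza⟩, -⟩ := hu.2 z hz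
    obtain ⟨b, ⟨hb, hzb⟩, -⟩ := hv.2 z hz
    refine ⟨a ∩ b, ⟨⟨⟨z, hza, hzb⟩, a, ha, b, hb, rfl⟩, hza, hzb⟩, ?_⟩
    rintro s ⟨⟨-, a', ha', b', hb', rfl⟩, hza', hzb'⟩
    rw [part_eq_of_mem hu ha' ha hza' hza, part_eq_of_mem hv hb' hb hzb' hzb]

lemma meet_refines_left {u v : Set (Set ℂ)} : Refines (meetParts u v) u := by
  rintro s ⟨hs, a, ha, b, hb, rfl⟩
  exact ⟨a, ha, Set.inter_subset_left⟩

lemma meet_refines_right {u v : Set (Set ℂ)} : Refines (meetParts u v) v := by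
  rintro s ⟨hs, a, ha, b, hb, rfl⟩
  exact ⟨b, hb, Set.inter_subset_right⟩

lemma refines_meet {u v w : Set (Set ℂ)} (hw : ∀ c ∈ w, (c : Set ℂ).Nonempty)
    (h1 : Refines w u) (h2 : Refines w v) : Refines w (meetParts u v) := by
  intro c hc
  obtain ⟨a, ha, hca⟩ := h1 c hc
  obtain ⟨b, hb, hcb⟩ := h2 c hc
  exact ⟨a ∩ b, ⟨(hw c hc).mono (Set.subset_inter hca hcb), a, ha, b, hb, rfl⟩,
    Set.subset_inter hca hcb⟩

lemma meet_noncrossing {u v : Set (Set ℂ)} (hu : IsNoncrossing u) (hv : IsNoncrossing v) :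
    IsNoncrossing (meetParts u v) := by
  rintro s ⟨hs, a, ha, b, hb, rfl⟩ t ⟨ht, a', ha', b', hb', rfl⟩ ⟨z, hz1, hz2⟩
  have hsa := convexHull_mono (Set.inter_subset_left (s := a) (t := b)) (𝕜 := ℝ)
  have hsb := convexHull_mono (Set.inter_subset_right (s := a) (t := b)) (𝕜 := ℝ)
  have hta := convexHull_mono (Set.inter_subset_left (s := a') (t := b')) (𝕜 := ℝ)
  have htb := convexHull_mono (Set.inter_subset_right (s := a') (t := b')) (𝕜 := ℝ)
  have haa : a = a' := hu a ha a' ha' ⟨z, hsa hz1, hta hz2⟩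
  have hbb : b = b' := hv b hb b' hb' ⟨z, hsb hz1, htb hz2⟩
  rw [haa, hbb]

lemma flat_meet (u v : Set (Set ℂ)) :
    flatNCP (meetParts u v) = meetParts (flatNCP u) (flatNCP v) := by
  have key : ∀ a b : Set ℂ, (a ∩ b) \ {0} = (a \ {0}) ∩ (b \ {0}) := by
    intro a b; ext z; simp only [Set.mem_diff, Set.mem_inter_iff, Set.mem_singleton_iff]; tauto
  ext s
  constructor
  · rintro ⟨hs, c, ⟨-, a, ha, b, hb, rfl⟩, rfl⟩
    rw [key] at hs ⊢
    refine ⟨hs, a \ {0}, ⟨?_, a, ha, rfl⟩, b \ {0}, ⟨?_, b, hb, rfl⟩, rfl⟩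
    · exact hs.mono Set.inter_subset_left
    · exact hs.mono Set.inter_subset_right
  · rintro ⟨hs, a', ⟨-, a, ha, rfl⟩, b', ⟨-, b, hb, rfl⟩, rfl⟩
    rw [← key] at hs ⊢
    refine ⟨hs, a ∩ b, ⟨?_, a, ha, b, hb, rfl⟩, rfl⟩
    exact hs.mono Set.diff_subset

lemma rotate_meet {c : ℂ} (hc : c ≠ 0) (u v : Set (Set ℂ)) :
    rotate c (meetParts u v) = meetParts (rotate c u) (rotate c v) := by
  have hinj : Function.Injective (fun z : ℂ => c * z) := mul_right_injective₀ hc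
  have him : ∀ a b : Set ℂ, (fun z : ℂ => c * z) '' (a ∩ b)
      = ((fun z : ℂ => c * z) '' a) ∩ ((fun z : ℂ => c * z) '' b) :=
    fun a b => Set.image_inter hinj
  ext s
  simp only [rotate, meetParts, Set.mem_image, Set.mem_setOf_eq]
  constructor
  · rintro ⟨t, ⟨ht, a, ha, b, hb, rfl⟩, rfl⟩
    exact ⟨ht.image _, _, ⟨a, ha, rfl⟩, _, ⟨b, hb, rfl⟩, him a b⟩
  · rintro ⟨hs, a', ⟨a, ha, rfl⟩, b', ⟨b, hb, rfl⟩, rfl⟩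
    rw [← him a b] at hs
    exact ⟨a ∩ b, ⟨Set.image_nonempty.mp hs, a, ha, b, hb, rfl⟩, him a b⟩

lemma zeta_ne_zero {e : ℕ} (he : 0 < e) {ζ : ℂ} (hζ : ζ ^ e = 1) : ζ ≠ 0 := by
  intro h; rw [h, zero_pow he.ne'] at hζ; exact zero_ne_one hζ

lemma meet_mem_NCPee {e n : ℕ} (he : 0 < e) {u v : Set (Set ℂ)}
    (hu : u ∈ NCPee e n) (hv : v ∈ NCPee e n) : meetParts u v ∈ NCPee e n := by
  obtain ⟨hu1, hu2, hu3⟩ := hu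
  obtain ⟨hv1, hv2, hv3⟩ := hv
  refine ⟨meet_isPartition hu1 hv1, meet_noncrossing hu2 hv2, ?_⟩
  intro ζ hζ
  rw [flat_meet, rotate_meet (zeta_ne_zero he hζ), hu3 ζ hζ, hv3 ζ hζ]

-- top element
lemma zero_not_mem_mu {e n : ℕ} (he : 0 < e) (hn : 0 < n) : (0 : ℂ) ∉ mu (e * n) := by
  intro h
  have : (0 : ℂ) ^ (e * n) = 1 := h
  rw [zero_pow (Nat.mul_ne_zero he.ne' hn.ne')] at this
  exact zero_ne_one this

lemma image_mu {e n : ℕ} {ζ : ℂ} (he : 0 < e) (hζ : ζ ^ e = 1) :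
    (fun z => ζ * z) '' mu (e * n) = mu (e * n) := by
  have hζen : ζ ^ (e * n) = 1 := by rw [pow_mul, hζ, one_pow]
  have hζ0 : ζ ≠ 0 := zeta_ne_zero he hζ
  ext w
  constructor
  · rintro ⟨z, hz, rfl⟩
    show (ζ * z) ^ (e * n) = 1
    rw [mul_pow, hζen, hz, one_mul]
  · intro hw
    refine ⟨ζ⁻¹ * w, ?_, by field_simp⟩
    show (ζ⁻¹ * w) ^ (e * n) = 1
    rw [mul_pow, inv_pow, hζen, inv_one, hw, one_mul]

lemma trivEE_mem {e n : ℕ} (he : 0 < e) (hn : 0 < n) : trivEE e n ∈ NCPee e n := by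
  have h0 : (0 : ℂ) ∉ mu (e * n) := zero_not_mem_mu he hn
  have h1 : (1 : ℂ) ∈ mu (e * n) := one_pow _
  have hX : (insert 0 (mu (e * n)) : Set ℂ) \ {0} = mu (e * n) := by
    ext z
    simp only [Set.mem_diff, Set.mem_insert_iff, Set.mem_singleton_iff]
    constructor
    · rintro ⟨h | h, h0z⟩
      · exact absurd h h0z
      · exact h
    · intro hz; exact ⟨Or.inr hz, fun h => h0 (h ▸ hz)⟩
  have hflat : flatNCP (trivEE e n) = {mu (e * n)} := by
    ext s
    simp only [flatNCP, trivEE, Set.mem_setOf_eq, Set.mem_singleton_iff]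
    constructor
    · rintro ⟨-, a, rfl, rfl⟩; exact hX
    · rintro rfl; exact ⟨⟨1, h1⟩, _, rfl, hX.symm⟩
  refine ⟨⟨?_, ?_⟩, ?_, ?_⟩
  · rintro a rfl
    exact ⟨⟨0, Set.mem_insert _ _⟩, subset_rfl⟩
  · intro z hz
    exact ⟨insert 0 (mu (e * n)), ⟨rfl, hz⟩, fun a ha => ha.1⟩
  · rintro a rfl b rfl -; rfl
  · intro ζ hζ
    rw [hflat]
    show (fun a => (fun z => ζ * z) '' a) '' {mu (e * n)} = {mu (e * n)}
    rw [Set.image_singleton, image_mu he hζ]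

lemma refines_trivEE {e n : ℕ} {u : Set (Set ℂ)} (hu : u ∈ NCPee e n) :
    Refines u (trivEE e n) := by
  intro a ha
  exact ⟨insert 0 (mu (e * n)), rfl, (hu.1.1 a ha).2⟩

-- finiteness
lemma NCPee_finite (e n : ℕ) (he : 0 < e) (hn : 0 < n) : (NCPee e n).Finite := by
  have hmu : (mu (e * n)).Finite := by
    apply Set.Finite.subset (Polynomial.nthRoots (e * n) (1 : ℂ)).toFinset.finite_toSet
    intro z hz
    simp only [Multiset.mem_toFinset, Finset.mem_coe,
      Polynomial.mem_nthRoots (Nat.mul_pos he hn)]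
    exact hz
  have hX : (insert (0 : ℂ) (mu (e * n))).Finite := hmu.insert 0
  apply Set.Finite.subset hX.finite_subsets.finite_subsets
  intro u hu
  intro a ha
  exact (hu.1.1 a ha).2

-- glb over a finite nonempty family
lemma finset_glb {e n : ℕ} (he : 0 < e) (s : Finset (Set (Set ℂ)))
    (hs : s.Nonempty) (hsub : ∀ x ∈ s, x ∈ NCPee e n) :
    ∃ m ∈ NCPee e n, (∀ x ∈ s, Refines m x) ∧
      ∀ w ∈ NCPee e n, (∀ x ∈ s, Refines w x) → Refines w m := by
  revert hsub
  induction hs using Finset.Nonempty.cons_induction with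
  | singleton a =>
    intro hsub
    refine ⟨a, hsub a (Finset.mem_singleton_self a), ?_, ?_⟩
    · intro x hx
      rw [Finset.mem_singleton] at hx
      subst hx
      intro c hc; exact ⟨c, hc, subset_rfl⟩
    · intro w hw hwx
      exact hwx a (Finset.mem_singleton_self a)
  | cons a s ha hsne ih =>
    intro hsub
    obtain ⟨m, hm, hmref, hmglb⟩ := ih (fun x hx => hsub x (Finset.mem_cons_of_mem hx))
    have haN := hsub a (Finset.mem_cons_self a s)
    refine ⟨meetParts a m, meet_mem_NCPee he haN hm, ?_, ?_⟩
    · intro x hx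
      rcases Finset.mem_cons.mp hx with rfl | hx
      · exact meet_refines_left
      · exact refines_trans meet_refines_right (hmref x hx)
    · intro w hw hwx
      have h1 : Refines w a := hwx a (Finset.mem_cons_self a s)
      have h2 : Refines w m := hmglb w hw (fun x hx => hwx x (Finset.mem_cons_of_mem hx))
      exact refines_meet (fun c hc => (hw.1.1 c hc).1) h1 h2

/-- `NCP(e,e,n+1)`, the set of non-crossing partitions of `μ_{en} ∪ {0}` whose
flat (forgetting `0`) is `μ_e`-invariant, is a lattice under refinement. -/
theorem stmt9 (e n : ℕ) (he : 0 < e) (hn : 0 < n) (u v : Set (Set ℂ))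
    (hu : u ∈ NCPee e n) (hv : v ∈ NCPee e n) :
    (∃ m ∈ NCPee e n, Refines m u ∧ Refines m v ∧
      ∀ w ∈ NCPee e n, Refines w u → Refines w v → Refines w m) ∧
    (∃ j ∈ NCPee e n, Refines u j ∧ Refines v j ∧
      ∀ w ∈ NCPee e n, Refines u w → Refines v w → Refines j w) := by
  constructor
  · refine ⟨meetParts u v, meet_mem_NCPee he hu hv, meet_refines_left,
      meet_refines_right, ?_⟩
    intro w hw h1 h2
    exact refines_meet (fun c hc => (hw.1.1 c hc).1) h1 h2
  · have hfin : {w ∈ NCPee e n | Refines u w ∧ Refines v w}.Finite :=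
      (NCPee_finite e n he hn).subset (fun w hw => hw.1)
    have hne : {w ∈ NCPee e n | Refines u w ∧ Refines v w}.Nonempty :=
      ⟨trivEE e n, trivEE_mem he hn, refines_trivEE hu, refines_trivEE hv⟩
    obtain ⟨m, hm, hmref, hmglb⟩ := finset_glb he hfin.toFinset
      (by rwa [Set.Finite.toFinset_nonempty])
      (fun x hx => ((hfin.mem_toFinset).mp hx).1)
    refine ⟨m, hm, ?_, ?_, ?_⟩
    · exact hmglb u hu (fun x hx => ((hfin.mem_toFinset).mp hx).2.1)
    · exact hmglb v hv (fun x hx => ((hfin.mem_toFinset).mp hx).2.2)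
    · intro w hw h1 h2
      exact hmref w (hfin.mem_toFinset.mpr ⟨hw, h1, h2⟩)
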